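/- For a relation ← ⊆ Q × Q on a finite path Q, the following are equivalent: (1) ← is bi-surjective (surjective and co-surjective) and connected as a subgraph of Q × Q with the product edge relation; (2) there exist edge-preserving co-bijective relations ⊐, ⊵ ⊆ Q × R from some path R with ← ⊆ ⊐ ∘ ⊴ and =_R ⊆ ⊏ ∘ ← ∘ ⊵; (3) ← = f ∘ g⁻¹ for some edge-preserving surjective functions f, g : R → Q from some path R. -/

import Mathlib

namespace PathCat

/-- The edge relation on the standard path `P_n` with vertices `Fin (n+1)`:
`i ⊓ j` iff `|i − j| ≤ 1` (reflexive and symmetric). -/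
def AdjF {n : ℕ} (i j : Fin (n + 1)) : Prop := (i : ℕ) ≤ (j : ℕ) + 1 ∧ (j : ℕ) ≤ (i : ℕ) + 1

/-- Edge-preserving relation (as a subset of codomain × domain):
`⊐ ∘ ⊓ ∘ ⊏ ⊆ ⊓`. -/
def EdgePresRel {m n : ℕ} (R : Fin (n + 1) → Fin (m + 1) → Prop) : Prop :=
  ∀ i j k l, R i k → AdjF k l → R j l → AdjF i j

/-- Co-surjective: every element of the domain is related to something. -/
def CoSurjRel {m n : ℕ} (R : Fin (n + 1) → Fin (m + 1) → Prop) : Prop := ∀ k, ∃ i, R i k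

/-- Co-injective: every element of the codomain is the sole image of some element. -/
def CoInjRel {m n : ℕ} (R : Fin (n + 1) → Fin (m + 1) → Prop) : Prop :=
  ∀ i, ∃ k, ∀ i', R i' k ↔ i' = i

/-- A morphism of the path category `P`: an edge-preserving co-bijective relation
from `P_m` to `P_n` (subset of `P_n × P_m`). -/
def IsMorRel {m n : ℕ} (R : Fin (n + 1) → Fin (m + 1) → Prop) : Prop :=
  EdgePresRel R ∧ CoSurjRel R ∧ CoInjRel R

/-- Relational composition. -/
def compRel {m n l : ℕ} (S : Fin (l + 1) → Fin (n + 1) → Prop)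
    (R : Fin (n + 1) → Fin (m + 1) → Prop) : Fin (l + 1) → Fin (m + 1) → Prop :=
  fun a c => ∃ b, S a b ∧ R b c

/-- Isomorphism in the path category. -/
def IsIsoRel {m n : ℕ} (R : Fin (n + 1) → Fin (m + 1) → Prop) : Prop :=
  IsMorRel R ∧ ∃ S : Fin (m + 1) → Fin (n + 1) → Prop, IsMorRel S ∧
    (∀ a c, compRel R S a c ↔ a = c) ∧ (∀ a c, compRel S R a c ↔ a = c)

/-- Prime morphism: not an isomorphism, but any factorization into two morphisms
forces one factor to be an isomorphism. -/
def IsPrimeRel {m n : ℕ} (R : Fin (n + 1) → Fin (m + 1) → Prop) : Prop :=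
  IsMorRel R ∧ ¬ IsIsoRel R ∧
    ∀ (k : ℕ) (S : Fin (n + 1) → Fin (k + 1) → Prop) (T : Fin (k + 1) → Fin (m + 1) → Prop),
      IsMorRel S → IsMorRel T → (∀ a c, R a c ↔ compRel S T a c) → IsIsoRel S ∨ IsIsoRel T

/-- Edge-injective morphism: on every edge of the domain, the relation restricts to
an injective function with distinct singleton images. -/
def EdgeInjRel {m n : ℕ} (R : Fin (n + 1) → Fin (m + 1) → Prop) : Prop :=
  ∀ k l : Fin (m + 1), AdjF k l → k ≠ l →
    ∃ i j, i ≠ j ∧ (∀ i', R i' k ↔ i' = i) ∧ (∀ j', R j' l ↔ j' = j)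

/-- Morphisms of the category `F`: edge-preserving surjective functions. -/
def IsMorF {m n : ℕ} (f : Fin (m + 1) → Fin (n + 1)) : Prop :=
  Function.Surjective f ∧ ∀ a b, AdjF a b → AdjF (f a) (f b)

/-- Isomorphism in `F`. -/
def IsIsoF {m n : ℕ} (f : Fin (m + 1) → Fin (n + 1)) : Prop :=
  IsMorF f ∧ ∃ g : Fin (n + 1) → Fin (m + 1), IsMorF g ∧
    (∀ a, g (f a) = a) ∧ ∀ b, f (g b) = b

/-- Prime morphism in `F`. -/
def IsPrimeF {m n : ℕ} (f : Fin (m + 1) → Fin (n + 1)) : Prop :=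
  IsMorF f ∧ ¬ IsIsoF f ∧
    ∀ (k : ℕ) (g : Fin (k + 1) → Fin (n + 1)) (h : Fin (m + 1) → Fin (k + 1)),
      IsMorF g → IsMorF h → (∀ a, f a = g (h a)) → IsIsoF g ∨ IsIsoF h

/-- An edge-injective morphism of paths: an edge-preserving surjective function
mapping each edge of the domain onto an edge of the codomain. -/
def IsEdgeInjFun {m n : ℕ} (f : Fin (m + 1) → Fin (n + 1)) : Prop :=
  Function.Surjective f ∧ (∀ a b : Fin (m + 1), AdjF a b → AdjF (f a) (f b)) ∧
    ∀ a b : Fin (m + 1), (a : ℕ) + 1 = (b : ℕ) → f a ≠ f b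

/-- The turning number: the number of length-two subpaths mapped onto an edge. -/
noncomputable def turningNumber {m n : ℕ} (f : Fin (m + 1) → Fin (n + 1)) : ℕ :=
  Set.ncard {b : Fin (m + 1) | ∃ a c : Fin (m + 1),
    (a : ℕ) + 1 = (b : ℕ) ∧ (b : ℕ) + 1 = (c : ℕ) ∧ f a = f c}

/-- Proper function: no restriction to a proper subpath is still surjective. -/
def ProperFun {m n : ℕ} (f : Fin (m + 1) → Fin (n + 1)) : Prop :=
  ∀ a b : Fin (m + 1), a ≤ b → (∀ j, ∃ k, a ≤ k ∧ k ≤ b ∧ f k = j) →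
    ((a : ℕ) = 0 ∧ (b : ℕ) = m)

/-- Composite of a chain of morphisms `F i : P_{d i} → P_{d (i+1)}`. -/
def chainComp (d : ℕ → ℕ) (F : ∀ i : ℕ, Fin (d (i + 1) + 1) → Fin (d i + 1) → Prop) :
    ∀ k : ℕ, Fin (d k + 1) → Fin (d 0 + 1) → Prop
  | 0 => fun a c => a = c
  | k + 1 => fun a c => ∃ b, F k a b ∧ chainComp d F k b c

end PathCat

/-!
A bi-surjective connected relation `L` is traversed by a walk `φ : R → Q × Q` through all of
its pairs whose steps are product edges; the two coordinates of `φ` are then edge-preserving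
surjections `f, g` with `L = f ∘ g⁻¹`. Graphs of such surjections are co-bijective
edge-preserving relations, which gives the subfactorisation. Conversely, given the
subfactorisation, choosing for each `r ∈ R` a pair `(a r, b r) ∈ L` over `r` yields a walk along
`R` in `L`, every pair of `L` is adjacent to a point of it, and co-injectivity makes `L`
bi-surjective.
-/

open Relation

theorem List.exists_isChain_cons_subset {α : Type*} {r : α → α → Prop} {S : Set α}
    (hconn : ∀ p ∈ S, ∀ q ∈ S, ReflTransGen r p q) :
    ∀ l : List α, (∀ p ∈ l, p ∈ S) → ∀ q ∈ S, ∃ w, IsChain r (q :: w) ∧ l ⊆ q :: w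
  | [], _, q, _ => ⟨[], .singleton q, List.nil_subset _⟩
  | p :: t, hl, q, hq => by
    have hp : p ∈ S := hl p List.mem_cons_self
    obtain ⟨w, hw, ht⟩ :=
      List.exists_isChain_cons_subset hconn t (fun x hx => hl x (List.mem_cons_of_mem p hx)) p hp
    refine ReflTransGen.head_induction_on (hconn q hq p hp) ⟨w, hw, ?_⟩ ?_
    · exact List.cons_subset.2 ⟨List.mem_cons_self, ht⟩
    · rintro x y hxy - ⟨v, hv, hsub⟩
      exact ⟨y :: v, hv.cons_cons hxy, List.Subset.trans hsub (List.subset_cons_self x _)⟩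

theorem exists_fin_walk_range_eq {α : Type*} [Finite α] {r : α → α → Prop} {S : Set α}
    (hne : S.Nonempty) (hr : ∀ ⦃x y⦄, r x y → y ∈ S)
    (hconn : ∀ p ∈ S, ∀ q ∈ S, ReflTransGen r p q) :
    ∃ (m : ℕ) (φ : Fin (m + 1) → α), Set.range φ = S ∧
      ∀ i j : Fin (m + 1), (i : ℕ) + 1 = j → r (φ i) (φ j) := by
  obtain ⟨q, hq⟩ := hne
  obtain ⟨w, hw, hcov⟩ := List.exists_isChain_cons_subset hconn (Set.toFinite S).toFinset.toList
    (fun p hp => by simpa using hp) q hq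
  refine ⟨w.length, (q :: w).get, ?_, ?_⟩
  · ext p
    rw [Set.range_list_get]
    constructor
    · intro hp
      rcases List.mem_cons.1 hp with rfl | hp
      · exact hq
      · exact hw.cons_induction (· ∈ S) w (fun _ y hxy _ => hr hxy) hq p hp
    · intro hp
      exact hcov (by simpa using hp)
  · rintro ⟨i, hi⟩ ⟨j, hj⟩ (rfl : i + 1 = j)
    exact List.isChain_iff_getElem.1 hw i (by simpa using hj)

theorem reflTransGen_of_forall_succ {α : Type*} {r : α → α → Prop} [Std.Symm r] {m : ℕ}
    {φ : Fin (m + 1) → α} (h : ∀ i j : Fin (m + 1), (i : ℕ) + 1 = j → r (φ i) (φ j))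
    (s t : Fin (m + 1)) : ReflTransGen r (φ s) (φ t) := by
  have from_zero : ∀ k (hk : k < m + 1), ReflTransGen r (φ 0) (φ ⟨k, hk⟩) := by
    intro k
    induction k with
    | zero => exact fun _ => .refl
    | succ k ih => exact fun hk => (ih (by omega)).tail (h _ _ rfl)
  exact (Std.Symm.symm _ _ (from_zero s s.2)).trans (from_zero t t.2)

namespace PathCat

theorem AdjF.refl {n : ℕ} (i : Fin (n + 1)) : AdjF i i := ⟨Nat.le_succ _, Nat.le_succ _⟩

theorem AdjF.symm {n : ℕ} {i j : Fin (n + 1)} (h : AdjF i j) : AdjF j i := ⟨h.2, h.1⟩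

theorem AdjF.of_forall_succ {m : ℕ} {P : Fin (m + 1) → Fin (m + 1) → Prop}
    (hrefl : ∀ i, P i i) (hsymm : ∀ i j, P i j → P j i)
    (hsucc : ∀ i j : Fin (m + 1), (i : ℕ) + 1 = j → P i j) {i j : Fin (m + 1)}
    (h : AdjF i j) : P i j := by
  obtain ⟨h₁, h₂⟩ := h
  rcases lt_trichotomy (i : ℕ) j with hij | hij | hij
  · exact hsucc i j (by omega)
  · exact Fin.ext hij ▸ hrefl i
  · exact hsymm j i (hsucc j i (by omega))

theorem IsMorF.isMorRel_graph {m n : ℕ} {f : Fin (m + 1) → Fin (n + 1)} (hf : IsMorF f) :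
    IsMorRel (fun a r => f r = a) := by
  refine ⟨fun i j k l hik hkl hjl => hik ▸ hjl ▸ hf.2 k l hkl, fun k => ⟨f k, rfl⟩, fun i => ?_⟩
  obtain ⟨k, rfl⟩ := hf.1 i
  exact ⟨k, fun i' => eq_comm⟩

section

variable {n k : ℕ} (L : Fin (n + 1) → Fin (k + 1) → Prop)

def relEdge (x y : Fin (n + 1) × Fin (k + 1)) : Prop :=
  L x.1 x.2 ∧ L y.1 y.2 ∧ AdjF x.1 y.1 ∧ AdjF x.2 y.2

def IsBiSurjConnected : Prop :=
  (∀ a, ∃ b, L a b) ∧ (∀ b, ∃ a, L a b) ∧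
    ∀ a b a' b', L a b → L a' b' → ReflTransGen (relEdge L) (a, b) (a', b')

/-- `L ⊆ R₁ ∘ R₂ᵀ` and `=_R ⊆ R₁ᵀ ∘ L ∘ R₂` for morphisms `R₁, R₂` of the path category. -/
def IsSubfactoredByMorRel : Prop :=
  ∃ (m : ℕ) (R₁ : Fin (n + 1) → Fin (m + 1) → Prop) (R₂ : Fin (k + 1) → Fin (m + 1) → Prop),
    IsMorRel R₁ ∧ IsMorRel R₂ ∧ (∀ a b, L a b → ∃ r, R₁ a r ∧ R₂ b r) ∧
      ∀ r, ∃ a b, R₁ a r ∧ R₂ b r ∧ L a b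

/-- `L = f ∘ g⁻¹` for edge-preserving surjections `f, g` out of a common path. -/
def IsMorFSpan : Prop :=
  ∃ (m : ℕ) (f : Fin (m + 1) → Fin (n + 1)) (g : Fin (m + 1) → Fin (k + 1)),
    IsMorF f ∧ IsMorF g ∧ ∀ a b, L a b ↔ ∃ r, f r = a ∧ g r = b

variable {L}

instance : Std.Symm (relEdge L) where
  symm _ _ h := ⟨h.2.1, h.1, h.2.2.1.symm, h.2.2.2.symm⟩

theorem IsMorFSpan.isSubfactoredByMorRel (h : IsMorFSpan L) : IsSubfactoredByMorRel L := by
  obtain ⟨m, f, g, hf, hg, hL⟩ := h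
  exact ⟨m, _, _, hf.isMorRel_graph, hg.isMorRel_graph, fun a b hab => (hL a b).1 hab,
    fun r => ⟨f r, g r, rfl, rfl, (hL _ _).2 ⟨r, rfl, rfl⟩⟩⟩

theorem IsSubfactoredByMorRel.isBiSurjConnected (h : IsSubfactoredByMorRel L) :
    IsBiSurjConnected L := by
  obtain ⟨m, R₁, R₂, hR₁, hR₂, hsub, hcov⟩ := h
  choose A B hA hB hL using hcov
  have walk : ∀ s t, ReflTransGen (relEdge L) (A s, B s) (A t, B t) :=
    reflTransGen_of_forall_succ (φ := fun r => (A r, B r)) fun s t hst =>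
      have hadj : AdjF s t := ⟨by omega, by omega⟩
      ⟨hL s, hL t, hR₁.1 _ _ _ _ (hA s) hadj (hA t), hR₂.1 _ _ _ _ (hB s) hadj (hB t)⟩
  have near_walk : ∀ a b, L a b → ∃ r, relEdge L (a, b) (A r, B r) := fun a b hab =>
    have ⟨r, ha, hb⟩ := hsub a b hab
    ⟨r, hab, hL r, hR₁.1 _ _ _ _ ha (.refl r) (hA r), hR₂.1 _ _ _ _ hb (.refl r) (hB r)⟩
  refine ⟨fun a => ?_, fun b => ?_, fun a b a' b' hab ha'b' => ?_⟩
  · obtain ⟨r, hr⟩ := hR₁.2.2 a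
    exact ⟨B r, (hr _).1 (hA r) ▸ hL r⟩
  · obtain ⟨r, hr⟩ := hR₂.2.2 b
    exact ⟨A r, (hr _).1 (hB r) ▸ hL r⟩
  · obtain ⟨r, hr⟩ := near_walk a b hab
    obtain ⟨r', hr'⟩ := near_walk a' b' ha'b'
    exact ((ReflTransGen.single hr).trans (walk r r')).tail (Std.Symm.symm _ _ hr')

theorem IsBiSurjConnected.isMorFSpan (h : IsBiSurjConnected L) : IsMorFSpan L := by
  obtain ⟨hsurj, hcosurj, hconn⟩ := h
  obtain ⟨b₀, hb₀⟩ := hsurj 0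
  obtain ⟨m, φ, hrange, hstep⟩ :=
    exists_fin_walk_range_eq (S := {p : Fin (n + 1) × Fin (k + 1) | L p.1 p.2}) ⟨(0, b₀), hb₀⟩
      (fun _ _ h => h.2.1) fun p hp q hq => hconn _ _ _ _ hp hq
  have mem_range : ∀ a b, L a b ↔ ∃ r, φ r = (a, b) := fun a b => by
    rw [← Set.mem_range, hrange]; rfl
  refine ⟨m, fun r => (φ r).1, fun r => (φ r).2, ⟨fun a => ?_, ?_⟩, ⟨fun b => ?_, ?_⟩, ?_⟩
  · obtain ⟨b, hab⟩ := hsurj a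
    obtain ⟨r, hr⟩ := (mem_range a b).1 hab
    exact ⟨r, congrArg Prod.fst hr⟩
  · exact fun _ _ => AdjF.of_forall_succ (fun _ => .refl _) (fun _ _ => AdjF.symm)
      fun i j hij => (hstep i j hij).2.2.1
  · obtain ⟨a, hab⟩ := hcosurj b
    obtain ⟨r, hr⟩ := (mem_range a b).1 hab
    exact ⟨r, congrArg Prod.snd hr⟩
  · exact fun _ _ => AdjF.of_forall_succ (fun _ => .refl _) (fun _ _ => AdjF.symm)
      fun i j hij => (hstep i j hij).2.2.2
  · intro a b
    simp only [mem_range, Prod.ext_iff]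

end

end PathCat

open PathCat in
/-- Characterisations of bi-surjective connected relations on a path. -/
theorem stmt19 {n : ℕ} (L : Fin (n + 1) → Fin (n + 1) → Prop) :
    (((∀ a, ∃ b, L a b) ∧ (∀ b, ∃ a, L a b) ∧
        ∀ a b a' b', L a b → L a' b' →
          Relation.ReflTransGen (fun x y : Fin (n + 1) × Fin (n + 1) =>
            L x.1 x.2 ∧ L y.1 y.2 ∧ AdjF x.1 y.1 ∧ AdjF x.2 y.2) (a, b) (a', b')) ↔
      (∃ (m : ℕ) (R₁ R₂ : Fin (n + 1) → Fin (m + 1) → Prop), IsMorRel R₁ ∧ IsMorRel R₂ ∧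
        (∀ a b, L a b → ∃ r, R₁ a r ∧ R₂ b r) ∧
        ∀ r, ∃ a b, R₁ a r ∧ R₂ b r ∧ L a b)) ∧
    ((∃ (m : ℕ) (R₁ R₂ : Fin (n + 1) → Fin (m + 1) → Prop), IsMorRel R₁ ∧ IsMorRel R₂ ∧
        (∀ a b, L a b → ∃ r, R₁ a r ∧ R₂ b r) ∧
        ∀ r, ∃ a b, R₁ a r ∧ R₂ b r ∧ L a b) ↔
      ∃ (m : ℕ) (f g : Fin (m + 1) → Fin (n + 1)), IsMorF f ∧ IsMorF g ∧
        ∀ a b, L a b ↔ ∃ r, f r = a ∧ g r = b) := by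
  have h12 : IsBiSurjConnected L → IsSubfactoredByMorRel L :=
    fun h => h.isMorFSpan.isSubfactoredByMorRel
  have h23 : IsSubfactoredByMorRel L → IsMorFSpan L :=
    fun h => h.isBiSurjConnected.isMorFSpan
  exact ⟨⟨h12, IsSubfactoredByMorRel.isBiSurjConnected⟩, ⟨h23, IsMorFSpan.isSubfactoredByMorRel⟩⟩
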